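/- arXiv:2003.12960 — 3 statements merged into one kernel-verified Lean document; each statement's English description precedes it below -/
import Mathlib

section
/- Let T be a finite tree rooted at v_r and w : V(T) → ℝ a nonnegative weight function with total weight 1. Then either there exists a path in T starting from v_r whose vertex set has weight at least 1/4, or there exist two disjoint sets A, B of nodes, each of weight at least 1/4, such that no vertex of A is an ancestor or descendant of any vertex of B. -/
open SimpleGraph Finset

/-- In a tree `T` rooted at `root`, `x` is an ancestor of `y` if `x ≠ y` and
`x` lies on the (unique) path from `root` to `y`. -/
def IsAncestor {V : Type*} (T : SimpleGraph V) (root x y : V) : Prop :=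
  x ≠ y ∧ ∀ p : T.Walk root y, p.IsPath → x ∈ p.support

/-!
Order the vertices by `x ≤ y` iff `x` lies on the root path of `y`, so that root paths are the
lower sets `Iic y`, and these are chains. Suppose every root path weighs less than `1/4`.
Two vertices whose subtrees weigh more than `1/2` each are comparable, since incomparable
vertices have disjoint subtrees; so these heavy vertices form a chain, contained in one root path,
of weight `< 1/4`. The other vertices are the disjoint union of the subtrees rooted at the minimal
ones among them. These subtrees are pairwise unrelated, weigh at most `1/2` each and more than
`3/4` together, so they can be split into two groups each weighing at least `1/4`.
-/

theorem Finset.exists_le_sum_and_le_sum_sdiff {ι : Type*} [DecidableEq ι] (s : Finset ι)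
    (f : ι → ℝ) {t : ℝ} (ht : 0 ≤ t) (hf : ∀ i ∈ s, f i ≤ 2 * t) (hs : 3 * t ≤ ∑ i ∈ s, f i) :
    ∃ G ⊆ s, t ≤ ∑ i ∈ G, f i ∧ t ≤ ∑ i ∈ s \ G, f i := by
  obtain ⟨G, hGmin⟩ := (s.powerset.filter (t ≤ ∑ i ∈ ·, f i)).exists_minimal
    ⟨s, by simp only [mem_filter, mem_powerset, subset_refl, true_and]; linarith⟩
  obtain ⟨hGs, hG⟩ : G ⊆ s ∧ t ≤ ∑ i ∈ G, f i := by simpa using hGmin.prop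
  have hmin : ∀ H ⊆ G, t ≤ ∑ i ∈ H, f i → G ⊆ H := fun H hHG hH =>
    hGmin.2 (by simpa using ⟨hHG.trans hGs, hH⟩) hHG
  -- a minimal `G` weighs at most `2 t`, so its complement keeps at least `t`
  have hG2 : ∑ i ∈ G, f i ≤ 2 * t := by
    rcases G.eq_empty_or_nonempty with rfl | ⟨c, hc⟩
    · simpa using ht
    by_cases hfc : t ≤ f c
    · have : G = {c} := Subset.antisymm (hmin {c} (by simpa using hc) (by simpa using hfc))
        (by simpa using hc)
      simpa [this] using hf c (hGs hc)
    · have herase : ∑ i ∈ G.erase c, f i < t := by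
        by_contra! h
        exact notMem_erase c G (hmin _ (erase_subset c G) h hc)
      rw [← add_sum_erase G f hc]
      linarith
  refine ⟨G, hGs, hG, ?_⟩
  rw [← sum_sdiff hGs] at hs
  linarith

section TreeOrder

variable {P : Type*} [PartialOrder P]

theorem eq_of_minimal_of_le_of_le (htree : ∀ z : P, IsChain (· ≤ ·) (Set.Iic z)) {Q : P → Prop}
    {m m' x : P} (hm : Minimal Q m) (hm' : Minimal Q m') (hx : m ≤ x) (hx' : m' ≤ x) : m = m' :=
  ((htree x).total hx hx').elim (fun h => hm'.eq_of_le hm.prop h) fun h => hm.eq_of_ge hm'.prop h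

variable [Fintype P] [DecidableLE P] {w : P → ℝ}

theorem sum_lt_of_isChain (hw : ∀ x, 0 ≤ w x) {S : Finset P} (hS : IsChain (· ≤ ·) (S : Set P))
    {c : ℝ} (hc : 0 < c) (hsmall : ∀ u, ∑ x with x ≤ u, w x < c) : ∑ x ∈ S, w x < c := by
  rcases S.eq_empty_or_nonempty with rfl | hne
  · simpa using hc
  obtain ⟨v, hv⟩ := S.exists_maximal hne
  refine lt_of_le_of_lt (sum_le_sum_of_subset_of_nonneg (fun x hx => ?_) fun x _ _ => hw x)
    (hsmall v)
  exact mem_filter.2 ⟨mem_univ x,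
    (hS.total hx hv.prop).elim id fun hvx => hv.le_of_ge hx hvx⟩

variable (htree : ∀ z : P, IsChain (· ≤ ·) (Set.Iic z))
include htree

theorem pairwiseDisjoint_filter_le_of_minimal {Q : P → Prop} {M : Finset P}
    (hM : ∀ m ∈ M, Minimal Q m) : (M : Set P).PairwiseDisjoint (fun m => univ.filter (m ≤ ·)) :=
  fun m hm m' hm' hne => disjoint_filter.2 fun _ _ hmx hm'x =>
    hne (eq_of_minimal_of_le_of_le htree (hM m hm) (hM m' hm') hmx hm'x)

theorem isChain_setOf_sum_lt_two_mul_sum_Ici (hw : ∀ x, 0 ≤ w x) :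
    IsChain (· ≤ ·) {x | ∑ y, w y < 2 * ∑ y with x ≤ y, w y} := by
  classical
  intro x (hx : _ < (_ : ℝ)) y (hy : _ < (_ : ℝ)) _
  by_contra hxy
  have hdisj : Disjoint (univ.filter (x ≤ ·)) (univ.filter (y ≤ ·)) :=
    disjoint_filter.2 fun z _ hxz hyz => hxy ((htree z).total hxz hyz)
  have hunion := sum_le_sum_of_subset_of_nonneg (subset_univ (univ.filter (x ≤ ·) ∪
    univ.filter (y ≤ ·))) fun z _ _ => hw z
  rw [sum_union hdisj] at hunion
  linarith

theorem sum_filter_eq_sum_sum_Ici {Q : P → Prop} [DecidablePred Q] (hQ : IsUpperSet {x | Q x})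
    (M : Finset P) (hM : ∀ m, m ∈ M ↔ Minimal Q m) :
    ∑ x with Q x, w x = ∑ m ∈ M, ∑ y with m ≤ y, w y := by
  classical
  rw [← sum_biUnion (pairwiseDisjoint_filter_le_of_minimal htree fun m => (hM m).1)]
  congr 1
  ext x
  simp only [mem_filter, mem_univ, true_and, mem_biUnion, hM]
  exact ⟨fun hx => (exists_minimal_le_of_wellFoundedLT Q x hx).imp fun m h => ⟨h.2, h.1⟩,
    fun ⟨m, hm, hmx⟩ => hQ hmx hm.prop⟩

theorem exists_unrelated_of_sum_Iic_lt (hw : ∀ x, 0 ≤ w x) (hsum : ∑ x, w x = 1)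
    (hsmall : ∀ u, ∑ x with x ≤ u, w x < 1 / 4) :
    ∃ A B : Finset P, 1 / 4 ≤ ∑ x ∈ A, w x ∧ 1 / 4 ≤ ∑ x ∈ B, w x ∧
      ∀ x ∈ A, ∀ y ∈ B, ¬ (x ≤ y ∨ y ≤ x) := by
  classical
  set Q : P → Prop := fun x => ∑ y with x ≤ y, w y ≤ 1 / 2
  set M := univ.filter (Minimal Q)
  have hMQ : ∀ m ∈ M, Minimal Q m := fun m hm => (mem_filter.1 hm).2
  have hQ : IsUpperSet {x | Q x} := fun x y hxy (hx : _ ≤ (_ : ℝ)) =>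
    le_trans (sum_le_sum_of_subset_of_nonneg (monotone_filter_right _ fun _ _ => hxy.trans)
      fun z _ _ => hw z) hx
  have hheavy : ∑ x with ¬ Q x, w x < 1 / 4 := by
    refine sum_lt_of_isChain hw ((isChain_setOf_sum_lt_two_mul_sum_Ici htree hw).mono ?_)
      (by norm_num) hsmall
    intro x hx
    have hx : 1 / 2 < ∑ y with x ≤ y, w y := by simpa [Q] using hx
    change ∑ y, w y < 2 * _
    linarith
  have hlight := sum_filter_eq_sum_sum_Ici (w := w) htree hQ M (by simp [M])
  have htotal := sum_filter_add_sum_filter_not univ Q w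
  obtain ⟨G, hGM, hG, hMG⟩ := M.exists_le_sum_and_le_sum_sdiff (fun m => ∑ y with m ≤ y, w y)
    (t := 1 / 4) (by norm_num) (fun m hm => by linarith [(hMQ m hm).prop]) (by linarith)
  have hdisj := pairwiseDisjoint_filter_le_of_minimal htree hMQ
  refine ⟨G.biUnion fun m => univ.filter (m ≤ ·), (M \ G).biUnion fun m => univ.filter (m ≤ ·),
    by rwa [sum_biUnion (hdisj.subset (coe_subset.2 hGM))],
    by rwa [sum_biUnion (hdisj.subset (coe_subset.2 sdiff_subset))], ?_⟩
  simp only [mem_biUnion, mem_filter, mem_univ, true_and, mem_sdiff]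
  rintro x ⟨m, hmG, hmx⟩ y ⟨m', ⟨hm'M, hm'G⟩, hm'y⟩ hxy
  have hmm' : m = m' := by
    rcases hxy with hxy | hyx
    · exact eq_of_minimal_of_le_of_le htree (hMQ m (hGM hmG)) (hMQ m' hm'M) (hmx.trans hxy) hm'y
    · exact eq_of_minimal_of_le_of_le htree (hMQ m (hGM hmG)) (hMQ m' hm'M) hmx (hm'y.trans hyx)
  exact hm'G (hmm' ▸ hmG)

end TreeOrder

namespace SimpleGraph.IsTree

variable {V : Type*} {T : SimpleGraph V} (hT : T.IsTree) (r : V)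

noncomputable def rootPath (y : V) : T.Walk r y :=
  (hT.existsUnique_path r y).choose

theorem isPath_rootPath (y : V) : (hT.rootPath r y).IsPath :=
  (hT.existsUnique_path r y).choose_spec.1

theorem eq_rootPath {y : V} {p : T.Walk r y} (hp : p.IsPath) : p = hT.rootPath r y :=
  (hT.existsUnique_path r y).choose_spec.2 p hp

theorem mem_support_rootPath_iff {x y : V} : x ∈ (hT.rootPath r y).support ↔
    (hT.rootPath r x).support <+: (hT.rootPath r y).support := by
  classical
  refine ⟨fun h => ?_, fun h => h.subset (Walk.end_mem_support _)⟩
  rw [← hT.eq_rootPath r ((hT.isPath_rootPath r y).takeUntil h)]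
  conv_rhs => rw [← (hT.rootPath r y).take_spec h]
  rw [Walk.support_append]
  exact List.prefix_append _ _

noncomputable abbrev ancestorOrder : PartialOrder V where
  le x y := x ∈ (hT.rootPath r y).support
  le_refl x := Walk.end_mem_support _
  le_trans x y z hxy hyz := (hT.mem_support_rootPath_iff r).2
    (((hT.mem_support_rootPath_iff r).1 hxy).trans ((hT.mem_support_rootPath_iff r).1 hyz))
  le_antisymm x y hxy hyx := by
    have h := ((hT.mem_support_rootPath_iff r).1 hxy).eq_of_length_le
      ((hT.mem_support_rootPath_iff r).1 hyx).length_le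
    calc x = (hT.rootPath r x).support.getLast (by simp) := (Walk.getLast_support _).symm
      _ = (hT.rootPath r y).support.getLast (by simp) := List.getLast_congr _ _ h
      _ = y := Walk.getLast_support _

theorem isChain_support_rootPath (z : V) :
    IsChain (fun x y => x ∈ (hT.rootPath r y).support) {x | x ∈ (hT.rootPath r z).support} :=
  fun _ hx _ hy _ => List.prefix_or_prefix_of_prefix ((hT.mem_support_rootPath_iff r).1 hx)
    ((hT.mem_support_rootPath_iff r).1 hy) |>.imp (fun h => h.subset (Walk.end_mem_support _))
      fun h => h.subset (Walk.end_mem_support _)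

end SimpleGraph.IsTree

/-- Lemma (Bonamy–Bousquet–Thomassé): in a finite tree `T` rooted at `vr` with a
nonnegative weight function of total weight `1`, there is either a path from `vr`
of weight at least `1/4`, or two disjoint unrelated sets each of weight at least `1/4`. -/
theorem stmt_2 {V : Type*} [Fintype V] [DecidableEq V] (T : SimpleGraph V)
    (hT : T.IsTree) (vr : V) (w : V → ℝ) (hw : ∀ x, 0 ≤ w x)
    (hsum : ∑ x, w x = 1) :
    (∃ (u : V) (p : T.Walk vr u), p.IsPath ∧
      (1 : ℝ) / 4 ≤ ∑ x ∈ p.support.toFinset, w x) ∨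
    (∃ A B : Finset V, Disjoint A B ∧
      (1 : ℝ) / 4 ≤ ∑ x ∈ A, w x ∧ (1 : ℝ) / 4 ≤ ∑ x ∈ B, w x ∧
      ∀ x ∈ A, ∀ y ∈ B, ¬ (IsAncestor T vr x y ∨ IsAncestor T vr y x)) := by
  classical
  let _ : PartialOrder V := hT.ancestorOrder vr
  by_cases hpath : ∃ u, 1 / 4 ≤ ∑ x with x ≤ u, w x
  · obtain ⟨u, hu⟩ := hpath
    refine Or.inl ⟨u, hT.rootPath vr u, hT.isPath_rootPath vr u, ?_⟩
    convert hu using 2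
    ext x
    simp only [List.mem_toFinset, mem_filter, mem_univ, true_and]
    rfl
  push Not at hpath
  obtain ⟨A, B, hA, hB, hAB⟩ :=
    exists_unrelated_of_sum_Iic_lt (hT.isChain_support_rootPath vr) hw hsum hpath
  have hle : ∀ {x y}, IsAncestor T vr x y → x ≤ y := fun h => h.2 _ (hT.isPath_rootPath vr _)
  exact Or.inr ⟨A, B, disjoint_left.2 fun x hxA hxB => hAB x hxA x hxB (Or.inl le_rfl), hA, hB,
    fun x hx y hy h => hAB x hx y hy (h.imp hle hle)⟩
end

section
/- Let s ≥ t ≥ 6. Every (s,t)-cycle contains a pivot-minor isomorphic to an (s−2, t−6)-cycle. Specifically, if v_1,…,v_s are the vertices of C_s in cyclic order and X = {v_1,…,v_t}, then (C_s ⊕ X) ∧ v_2 v_{t−1} − v_2 − v_{t−1} is isomorphic to C_{s−2} ⊕ X' where X' consists of t−6 consecutive vertices on the cycle C_{s−2}. -/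
open SimpleGraph

/-- The pivot toggle: pairs of vertices lying in different classes among
`N(u)∩N(v)`, `N(u)\N(v)\{v}`, `N(v)\N(u)\{u}`. -/
def pivotToggle {V : Type*} (G : SimpleGraph V) (u v a b : V) : Prop :=
  ((G.Adj u a ∧ G.Adj v a) ∧ (G.Adj u b ∧ ¬ G.Adj v b ∧ b ≠ v)) ∨
  ((G.Adj u a ∧ G.Adj v a) ∧ (G.Adj v b ∧ ¬ G.Adj u b ∧ b ≠ u)) ∨
  ((G.Adj u a ∧ ¬ G.Adj v a ∧ a ≠ v) ∧ (G.Adj v b ∧ ¬ G.Adj u b ∧ b ≠ u)) ∨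
  ((G.Adj u b ∧ G.Adj v b) ∧ (G.Adj u a ∧ ¬ G.Adj v a ∧ a ≠ v)) ∨
  ((G.Adj u b ∧ G.Adj v b) ∧ (G.Adj v a ∧ ¬ G.Adj u a ∧ a ≠ u)) ∨
  ((G.Adj u b ∧ ¬ G.Adj v b ∧ b ≠ v) ∧ (G.Adj v a ∧ ¬ G.Adj u a ∧ a ≠ u))

/-- The graph `G ∧ uv` obtained from `G` by pivoting the edge `uv`:
complement the adjacency between the three classes pairwise and swap `u` and `v`. -/
def pivot {V : Type*} (G : SimpleGraph V) (u v : V) : SimpleGraph V :=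
  letI := Classical.decEq V
  SimpleGraph.fromRel (fun x y =>
    (pivotToggle G u v (Equiv.swap u v x) (Equiv.swap u v y) ∧
      ¬ G.Adj (Equiv.swap u v x) (Equiv.swap u v y)) ∨
    (¬ pivotToggle G u v (Equiv.swap u v x) (Equiv.swap u v y) ∧
      G.Adj (Equiv.swap u v x) (Equiv.swap u v y)))

/-- One pivot step: `H` is obtained from `G` by pivoting an edge. -/
def PivotStep {V : Type*} (G H : SimpleGraph V) : Prop :=
  ∃ u v, G.Adj u v ∧ H = pivot G u v

/-- `H` is (isomorphic to) a pivot-minor of `G`: `H` can be obtained from `G` by a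
sequence of pivots and vertex deletions. -/
def IsPivotMinor {W V : Type*} (H : SimpleGraph W) (G : SimpleGraph V) : Prop :=
  ∃ G' : SimpleGraph V, Relation.ReflTransGen PivotStep G G' ∧
    ∃ S : Set V, Nonempty (H ≃g G'.induce S)

/-- The partial complement `G ⊕ S`: complement all adjacencies within `S`. -/
def partialCompl {V : Type*} (G : SimpleGraph V) (S : Set V) : SimpleGraph V :=
  SimpleGraph.fromRel (fun x y =>
    (x ∈ S ∧ y ∈ S ∧ ¬ G.Adj x y) ∨ (¬ (x ∈ S ∧ y ∈ S) ∧ G.Adj x y))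

/-- The set of `t` consecutive vertices of the cycle `C_n` starting at `a`. -/
def consec (n : ℕ) (a : Fin n) (t : ℕ) : Set (Fin n) :=
  {x : Fin n | (x - a).val < t}

/-!
In `C_s ⊕ [0, t)` the vertex `u = 1` sees exactly `[3, t)` and `v = t - 2` exactly `[0, t - 3)`,
so `uv` is an edge and the three pivot classes are `[3, t - 4]`, `{t - 3, t - 1}` and `{0, 2}`.
Toggling the adjacencies between these classes and deleting `u` and `v` leaves the cycle
`0, 2, 3, …, t - 4, t - 3, t - 1, t, …, s - 1` on `s - 2` vertices, complemented exactly on the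
`t - 6` consecutive vertices `3, …, t - 4`; on labels this is a finite case analysis in linear
arithmetic. An arbitrary `(s, t)`-cycle is a rotation of this one, and pivoting is compatible with
graph isomorphisms.
-/

section General

variable {V W : Type*}

theorem partialCompl_adj (G : SimpleGraph V) (S : Set V) (x y : V) :
    (partialCompl G S).Adj x y ↔
      x ≠ y ∧ ((x ∈ S ∧ y ∈ S ∧ ¬ G.Adj x y) ∨ (¬ (x ∈ S ∧ y ∈ S) ∧ G.Adj x y)) := by
  rw [partialCompl, fromRel_adj, G.adj_comm y x]
  tauto

theorem pivotToggle_comm (G : SimpleGraph V) (u v a b : V) :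
    pivotToggle G u v a b ↔ pivotToggle G u v b a := by
  unfold pivotToggle
  constructor <;> rintro (h | h | h | h | h | h) <;> simp [h]

theorem pivot_adj_of_ne (G : SimpleGraph V) {u v x y : V}
    (hxu : x ≠ u) (hxv : x ≠ v) (hyu : y ≠ u) (hyv : y ≠ v) :
    (pivot G u v).Adj x y ↔ x ≠ y ∧
      ((pivotToggle G u v x y ∧ ¬ G.Adj x y) ∨ (¬ pivotToggle G u v x y ∧ G.Adj x y)) := by
  classical
  rw [pivot, fromRel_adj, Equiv.swap_apply_of_ne_of_ne hxu hxv,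
    Equiv.swap_apply_of_ne_of_ne hyu hyv, G.adj_comm y x, pivotToggle_comm G u v y x]
  tauto

theorem pivotToggle_map_iso {G : SimpleGraph V} {G' : SimpleGraph W} (e : G ≃g G')
    (u v a b : V) : pivotToggle G' (e u) (e v) (e a) (e b) ↔ pivotToggle G u v a b := by
  simp only [pivotToggle, e.map_adj_iff, e.injective.ne_iff]

def SimpleGraph.Iso.pivot {G : SimpleGraph V} {G' : SimpleGraph W} (e : G ≃g G') (u v : V) :
    _root_.pivot G u v ≃g _root_.pivot G' (e u) (e v) where
  toEquiv := e.toEquiv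
  map_rel_iff' {x y} := by
    classical
    show (_root_.pivot G' (e u) (e v)).Adj (e x) (e y) ↔ _
    simp only [_root_.pivot, fromRel_adj]
    rw [← e.injective.map_swap, ← e.injective.map_swap]
    simp only [pivotToggle_map_iso, e.map_adj_iff, e.injective.ne_iff]

theorem isPivotMinor_of_iso_induce_pivot {U : Type*} {K : SimpleGraph U} {H : SimpleGraph W}
    {G : SimpleGraph V} (e : H ≃g G) {u v : V} (huv : G.Adj u v) {S : Set V}
    (f : K ≃g (pivot G u v).induce S) : IsPivotMinor K H :=
  ⟨pivot H (e.symm u) (e.symm v), .single ⟨_, _, e.symm.map_adj_iff.mpr huv, rfl⟩, _,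
    ⟨f.trans ((e.symm.pivot u v).induce (e.symm.pivot u v).injective.injOn.bijOn_image)⟩⟩

end General

section Rotation

theorem cycleGraph_adj_add_right {n : ℕ} [NeZero n] (x y d : Fin n) :
    (cycleGraph n).Adj (x + d) (y + d) ↔ (cycleGraph n).Adj x y := by
  simp only [cycleGraph_adj', add_sub_add_right_eq_sub]

def partialComplCycleGraphConsecIso {n : ℕ} [NeZero n] (a b : Fin n) (t : ℕ) :
    partialCompl (cycleGraph n) (consec n a t) ≃g partialCompl (cycleGraph n) (consec n b t) where
  toEquiv := Equiv.addRight (b - a)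
  map_rel_iff' {x y} := by
    have hmem : ∀ z : Fin n, z + (b - a) ∈ consec n b t ↔ z ∈ consec n a t := fun z => by
      simp only [consec, Set.mem_ofPred_eq, show z + (b - a) - b = z - a by abel]
    simp only [Equiv.coe_addRight, partialCompl_adj, cycleGraph_adj_add_right, hmem,
      ne_eq, add_left_inj]

end Rotation

section Labels

theorem Fin.val_sub_eq_ite {n : ℕ} (a b : Fin n) :
    (a - b).val = if b.val ≤ a.val then a.val - b.val else n + a.val - b.val := by
  split_ifs with h
  · exact Fin.sub_val_of_le h
  · exact Fin.coe_sub_iff_lt.mpr (not_le.mp h)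

def CycleAdj (n x y : ℕ) : Prop :=
  x + 1 = y ∨ y + 1 = x ∨ (x = 0 ∧ y + 1 = n) ∨ (y = 0 ∧ x + 1 = n)

theorem cycleGraph_adj_iff_cycleAdj {n : ℕ} (hn : 2 ≤ n) (x y : Fin n) :
    (cycleGraph n).Adj x y ↔ CycleAdj n x y := by
  rw [cycleGraph_adj', Fin.val_sub_eq_ite, Fin.val_sub_eq_ite, CycleAdj]
  split_ifs <;> omega

theorem mem_consec_iff {n t : ℕ} {a : Fin n} (hat : a.val + t ≤ n) (x : Fin n) :
    x ∈ consec n a t ↔ a.val ≤ x.val ∧ x.val < a.val + t := by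
  rw [consec, Set.mem_ofPred_eq, Fin.val_sub_eq_ite]
  split_ifs <;> omega

def CycleComplAdj (n a t x y : ℕ) : Prop :=
  x ≠ y ∧ (((a ≤ x ∧ x < a + t) ∧ (a ≤ y ∧ y < a + t) ∧ ¬ CycleAdj n x y) ∨
    (¬ ((a ≤ x ∧ x < a + t) ∧ (a ≤ y ∧ y < a + t)) ∧ CycleAdj n x y))

theorem partialCompl_cycleGraph_consec_adj {n t : ℕ} (hn : 2 ≤ n) {a : Fin n}
    (hat : a.val + t ≤ n) (x y : Fin n) :
    (partialCompl (cycleGraph n) (consec n a t)).Adj x y ↔ CycleComplAdj n a t x y := by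
  rw [partialCompl_adj, cycleGraph_adj_iff_cycleAdj hn, mem_consec_iff hat, mem_consec_iff hat,
    Fin.ne_iff_vne, CycleComplAdj]

end Labels

section Pivot

variable {s t : ℕ} {a u v : Fin s}

theorem cycleCompl_adj_one_iff (ht : 6 ≤ t) (hts : t ≤ s) (ha : a.val = 0) (hu : u.val = 1)
    (c : Fin s) :
    (partialCompl (cycleGraph s) (consec s a t)).Adj u c ↔ 3 ≤ c.val ∧ c.val < t := by
  rw [partialCompl_cycleGraph_consec_adj (by omega) (by omega), CycleComplAdj, CycleAdj]
  omega

theorem cycleCompl_adj_sub_two_iff (ht : 6 ≤ t) (hts : t ≤ s) (ha : a.val = 0)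
    (hv : v.val = t - 2) (c : Fin s) :
    (partialCompl (cycleGraph s) (consec s a t)).Adj v c ↔ c.val + 4 ≤ t := by
  rw [partialCompl_cycleGraph_consec_adj (by omega) (by omega), CycleComplAdj, CycleAdj]
  omega

def PivotToggleLabel (t x y : ℕ) : Prop :=
  (3 ≤ x ∧ x + 4 ≤ t ∧ (y + 3 = t ∨ y + 1 = t ∨ y = 0 ∨ y = 2)) ∨
  ((x + 3 = t ∨ x + 1 = t) ∧ ((3 ≤ y ∧ y + 4 ≤ t) ∨ y = 0 ∨ y = 2)) ∨
  ((x = 0 ∨ x = 2) ∧ ((3 ≤ y ∧ y + 4 ≤ t) ∨ y + 3 = t ∨ y + 1 = t))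

theorem pivotToggle_cycleCompl_iff (ht : 6 ≤ t) (hts : t ≤ s) (ha : a.val = 0)
    (hu : u.val = 1) (hv : v.val = t - 2) (x y : Fin s) :
    pivotToggle (partialCompl (cycleGraph s) (consec s a t)) u v x y ↔
      PivotToggleLabel t x y := by
  simp only [pivotToggle, cycleCompl_adj_one_iff ht hts ha hu,
    cycleCompl_adj_sub_two_iff ht hts ha hv, Fin.ne_iff_vne, PivotToggleLabel]
  omega

theorem pivot_cycleCompl_adj_iff (ht : 6 ≤ t) (hts : t ≤ s) (ha : a.val = 0)
    (hu : u.val = 1) (hv : v.val = t - 2) {x y : Fin s}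
    (hx : x.val ≠ 1 ∧ x.val ≠ t - 2) (hy : y.val ≠ 1 ∧ y.val ≠ t - 2) :
    (pivot (partialCompl (cycleGraph s) (consec s a t)) u v).Adj x y ↔
      x.val ≠ y.val ∧ ((PivotToggleLabel t x y ∧ ¬ CycleComplAdj s 0 t x y) ∨
        (¬ PivotToggleLabel t x y ∧ CycleComplAdj s 0 t x y)) := by
  rw [pivot_adj_of_ne _ (Fin.ne_of_val_ne (hu ▸ hx.1)) (Fin.ne_of_val_ne (hv ▸ hx.2))
      (Fin.ne_of_val_ne (hu ▸ hy.1)) (Fin.ne_of_val_ne (hv ▸ hy.2)),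
    partialCompl_cycleGraph_consec_adj (by omega) (by omega),
    pivotToggle_cycleCompl_iff ht hts ha hu hv, Fin.ne_iff_vne, ha]

/-- The increasing enumeration of `ℕ \ {1, t - 2}`. -/
def skipLabel (t k : ℕ) : ℕ := if k = 0 then 0 else if k + 4 ≤ t then k + 1 else k + 2

def unskipLabel (t z : ℕ) : ℕ := if z = 0 then 0 else if z + 3 ≤ t then z - 1 else z - 2

theorem cycleComplAdj_skipLabel (ht : 6 ≤ t) (hts : t ≤ s) {x y : ℕ} (hx : x < s - 2)
    (hy : y < s - 2) :
    (skipLabel t x ≠ skipLabel t y ∧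
      ((PivotToggleLabel t (skipLabel t x) (skipLabel t y) ∧
          ¬ CycleComplAdj s 0 t (skipLabel t x) (skipLabel t y)) ∨
        (¬ PivotToggleLabel t (skipLabel t x) (skipLabel t y) ∧
          CycleComplAdj s 0 t (skipLabel t x) (skipLabel t y)))) ↔
      CycleComplAdj (s - 2) 2 (t - 6) x y := by
  unfold skipLabel CycleComplAdj CycleAdj PivotToggleLabel
  split_ifs <;> grind

def skipLabelEquiv (ht : 6 ≤ t) (hts : t ≤ s) :
    Fin (s - 2) ≃ {z : Fin s | z.val ≠ 1 ∧ z.val ≠ t - 2} where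
  toFun k := ⟨⟨skipLabel t k, by grind [skipLabel]⟩, by grind [skipLabel]⟩
  invFun z := ⟨unskipLabel t z.1, by grind [unskipLabel]⟩
  left_inv k := by grind [skipLabel, unskipLabel]
  right_inv z := by grind [skipLabel, unskipLabel]

def pivotCycleComplIso (ht : 6 ≤ t) (hts : t ≤ s) (ha : a.val = 0) (hu : u.val = 1)
    (hv : v.val = t - 2) {a' : Fin (s - 2)} (ha' : a'.val = 2) :
    partialCompl (cycleGraph (s - 2)) (consec (s - 2) a' (t - 6)) ≃g
      (pivot (partialCompl (cycleGraph s) (consec s a t)) u v).induce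
        {z : Fin s | z.val ≠ 1 ∧ z.val ≠ t - 2} where
  toEquiv := skipLabelEquiv ht hts
  map_rel_iff' {x y} := by
    rw [induce_adj, pivot_cycleCompl_adj_iff ht hts ha hu hv ((skipLabelEquiv ht hts) x).2
      ((skipLabelEquiv ht hts) y).2, partialCompl_cycleGraph_consec_adj (by omega) (by omega),
      ha']
    exact cycleComplAdj_skipLabel ht hts x.isLt y.isLt

end Pivot

/-- Lemma: for `s ≥ t ≥ 6`, every `(s,t)`-cycle contains a pivot-minor isomorphic
to an `(s−2, t−6)`-cycle; specifically, `(C_s ⊕ X) ∧ v₂v_{t−1} − v₂ − v_{t−1}`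
(where `X = {v₁,…,v_t}`) is isomorphic to `C_{s−2} ⊕ X'` with `X'` a set of `t−6`
consecutive vertices of `C_{s−2}`. -/
theorem stmt_6 (s t : ℕ) (ht : 6 ≤ t) (hts : t ≤ s)
    {V : Type*} (H : SimpleGraph V)
    (hH : ∃ a : Fin s, Nonempty (H ≃g partialCompl (cycleGraph s) (consec s a t))) :
    (∃ a' : Fin (s - 2),
      IsPivotMinor (partialCompl (cycleGraph (s - 2)) (consec (s - 2) a' (t - 6))) H) ∧
    (∃ a' : Fin (s - 2),
      Nonempty (((pivot (partialCompl (cycleGraph s) (consec s ⟨0, by omega⟩ t))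
          ⟨1, by omega⟩ ⟨t - 2, by omega⟩).induce
          {z : Fin s | z.val ≠ 1 ∧ z.val ≠ t - 2}) ≃g
        partialCompl (cycleGraph (s - 2)) (consec (s - 2) a' (t - 6)))) := by
  obtain ⟨a, ⟨e⟩⟩ := hH
  have : NeZero s := ⟨by omega⟩
  have E := pivotCycleComplIso (a := ⟨0, by omega⟩) (u := ⟨1, by omega⟩)
    (v := ⟨t - 2, by omega⟩) (a' := ⟨2, by omega⟩) ht hts rfl rfl rfl rfl
  have e₀ := e.trans (partialComplCycleGraphConsecIso a ⟨0, by omega⟩ t)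
  refine ⟨⟨_, isPivotMinor_of_iso_induce_pivot e₀ ?_ E⟩, _, ⟨E.symm⟩⟩
  exact (cycleCompl_adj_one_iff ht hts rfl rfl _).mpr (show 3 ≤ t - 2 ∧ t - 2 < t by omega)
end

section
/- Every hereditary class of graphs with the strong Erdős–Hajnal property has the Erdős–Hajnal property: if there exists ε > 0 such that every n-vertex graph in the class with n > 1 has disjoint vertex sets A, B with |A|, |B| ≥ εn and A complete or anticomplete to B, then there exists δ > 0 such that every graph G in the class satisfies max(α(G), ω(G)) ≥ |V(G)|^δ. -/
open SimpleGraph Finset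

set_option maxHeartbeats 1000000

/-- Every hereditary class of graphs with the strong Erdős–Hajnal property has the
Erdős–Hajnal property. -/
theorem stmt_12 (C : ∀ n : ℕ, SimpleGraph (Fin n) → Prop)
    (hher : ∀ (n m : ℕ) (G : SimpleGraph (Fin n)) (H : SimpleGraph (Fin m)),
      C n G → (∃ S : Set (Fin n), Nonempty (H ≃g G.induce S)) → C m H)
    (ε : ℝ) (hε : 0 < ε)
    (hstrong : ∀ n : ℕ, 1 < n → ∀ G : SimpleGraph (Fin n), C n G →
      ∃ A B : Finset (Fin n), Disjoint A B ∧
        ε * n ≤ A.card ∧ ε * n ≤ B.card ∧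
        ((∀ a ∈ A, ∀ b ∈ B, G.Adj a b) ∨ (∀ a ∈ A, ∀ b ∈ B, ¬ G.Adj a b))) :
    ∃ δ : ℝ, 0 < δ ∧ ∀ (n : ℕ) (G : SimpleGraph (Fin n)), C n G →
      ∃ s : Finset (Fin n),
        (G.IsClique (s : Set (Fin n)) ∨ Gᶜ.IsClique (s : Set (Fin n))) ∧
        (n : ℝ) ^ δ ≤ s.card := by
  set ε' : ℝ := min ε (1/2) with hε'def
  have hε'0 : 0 < ε' := lt_min hε (by norm_num)
  have hε'1 : ε' < 1 := lt_of_le_of_lt (min_le_right _ _) (by norm_num)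
  set c : ℝ := Real.logb ε' (1/2) with hcdef
  have hc0 : 0 < c := Real.logb_pos_of_base_lt_one hε'0 hε'1 (by norm_num) (by norm_num)
  have hεc : ε' ^ c = 1/2 := Real.rpow_logb hε'0 (ne_of_lt hε'1) (by norm_num)
  have key : ∀ n : ℕ, ∀ G : SimpleGraph (Fin n), C n G →
      ∃ s t : Finset (Fin n), G.IsClique (s : Set (Fin n)) ∧ Gᶜ.IsClique (t : Set (Fin n)) ∧
        (n : ℝ) ^ c ≤ (s.card : ℝ) * t.card := by
    intro n
    induction n using Nat.strong_induction_on with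
    | _ n IH =>
      intro G hG
      rcases Nat.lt_or_ge n 2 with hn | hn
      · -- n = 0 or n = 1
        interval_cases n
        · exact ⟨∅, ∅, by simp, by simp, by simp [Real.zero_rpow hc0.ne']⟩
        · refine ⟨Finset.univ, Finset.univ, ?_, ?_, ?_⟩
          · intro x hx y hy hxy; exact absurd (Subsingleton.elim x y) hxy
          · intro x hx y hy hxy; exact absurd (Subsingleton.elim x y) hxy
          · simp [Real.one_rpow]
      · -- main case
        have hn1 : 1 < n := hn
        have hn0 : (0:ℝ) < n := by positivity
        have pull : ∀ A : Finset (Fin n), A.card < n →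
            ∃ s t : Finset (Fin n), ↑s ⊆ (A : Set (Fin n)) ∧ ↑t ⊆ (A : Set (Fin n)) ∧
              G.IsClique (s : Set (Fin n)) ∧ Gᶜ.IsClique (t : Set (Fin n)) ∧
              (A.card : ℝ) ^ c ≤ (s.card : ℝ) * t.card := by
          intro A hA
          set m := A.card with hm
          set f : Fin m → Fin n := fun i => ((A.equivFin.symm i : A) : Fin n) with hf
          have hfinj : Function.Injective f := fun i j h =>
            A.equivFin.symm.injective (Subtype.ext h)
          have hfA : ∀ i, f i ∈ A := fun i => (A.equivFin.symm i).2
          set H : SimpleGraph (Fin m) := G.comap f with hH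
          have hCH : C m H :=
            hher n m G H hG ⟨(A : Set (Fin n)), ⟨⟨A.equivFin.symm, Iff.rfl⟩⟩⟩
          obtain ⟨s0, t0, hs0, ht0, hb0⟩ := IH m hA H hCH
          refine ⟨s0.map ⟨f, hfinj⟩, t0.map ⟨f, hfinj⟩, ?_, ?_, ?_, ?_, ?_⟩
          · intro x hx
            simp only [Finset.coe_map, Set.mem_image, Finset.mem_coe,
              Function.Embedding.coeFn_mk] at hx
            obtain ⟨i, _, rfl⟩ := hx
            exact hfA i
          · intro x hx
            simp only [Finset.coe_map, Set.mem_image, Finset.mem_coe,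
              Function.Embedding.coeFn_mk] at hx
            obtain ⟨i, _, rfl⟩ := hx
            exact hfA i
          · intro x hx y hy hxy
            simp only [Finset.coe_map, Set.mem_image, Finset.mem_coe,
              Function.Embedding.coeFn_mk] at hx hy
            obtain ⟨i, hi, rfl⟩ := hx
            obtain ⟨j, hj, rfl⟩ := hy
            exact hs0 hi hj (fun h => hxy (by rw [h]))
          · intro x hx y hy hxy
            simp only [Finset.coe_map, Set.mem_image, Finset.mem_coe,
              Function.Embedding.coeFn_mk] at hx hy
            obtain ⟨i, hi, rfl⟩ := hx
            obtain ⟨j, hj, rfl⟩ := hy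
            have hij : i ≠ j := fun h => hxy (by rw [h])
            have hadj := ht0 hi hj hij
            rw [SimpleGraph.compl_adj] at hadj ⊢
            exact ⟨hxy, hadj.2⟩
          · simpa using hb0
        obtain ⟨A, B, hdis, hAc, hBc, hcase⟩ := hstrong n hn1 G hG
        have hε'A : ε' * n ≤ (A.card : ℝ) :=
          le_trans (mul_le_mul_of_nonneg_right (min_le_left _ _) hn0.le) hAc
        have hε'B : ε' * n ≤ (B.card : ℝ) :=
          le_trans (mul_le_mul_of_nonneg_right (min_le_left _ _) hn0.le) hBc
        have hApos : 0 < A.card := by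
          have : (0:ℝ) < A.card := lt_of_lt_of_le (by positivity) hε'A
          exact_mod_cast this
        have hBpos : 0 < B.card := by
          have : (0:ℝ) < B.card := lt_of_lt_of_le (by positivity) hε'B
          exact_mod_cast this
        have hsum : A.card + B.card ≤ n := by
          rw [← Finset.card_union_of_disjoint hdis]
          simpa using Finset.card_le_univ (A ∪ B)
        have hAlt : A.card < n := by omega
        have hBlt : B.card < n := by omega
        obtain ⟨sA, tA, hsAsub, htAsub, hsA, htA, hbA⟩ := pull A hAlt
        obtain ⟨sB, tB, hsBsub, htBsub, hsB, htB, hbB⟩ := pull B hBlt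
        have hεnc : ((ε' : ℝ) * n) ^ c = (1/2) * (n:ℝ) ^ c := by
          rw [Real.mul_rpow hε'0.le hn0.le, hεc]
        have hbA' : (1/2) * (n:ℝ) ^ c ≤ (sA.card : ℝ) * tA.card := by
          rw [← hεnc]
          exact le_trans (Real.rpow_le_rpow (by positivity) hε'A hc0.le) hbA
        have hbB' : (1/2) * (n:ℝ) ^ c ≤ (sB.card : ℝ) * tB.card := by
          rw [← hεnc]
          exact le_trans (Real.rpow_le_rpow (by positivity) hε'B hc0.le) hbB
        have hsub_dis : ∀ {u v : Finset (Fin n)}, ↑u ⊆ (A : Set (Fin n)) →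
            ↑v ⊆ (B : Set (Fin n)) → Disjoint u v := by
          intro u v hu hv
          exact hdis.mono (Finset.coe_subset.mp hu) (Finset.coe_subset.mp hv)
        rcases hcase with hcomp | hanti
        · -- complete case
          have hdsAB : Disjoint sA sB := hsub_dis hsAsub hsBsub
          have hclique : G.IsClique ((sA ∪ sB : Finset (Fin n)) : Set (Fin n)) := by
            intro x hx y hy hxy
            simp only [Finset.coe_union, Set.mem_union] at hx hy
            rcases hx with hx | hx <;> rcases hy with hy | hy
            · exact hsA hx hy hxy
            · exact hcomp x (hsAsub hx) y (hsBsub hy)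
            · exact (hcomp y (hsAsub hy) x (hsBsub hx)).symm
            · exact hsB hx hy hxy
          have hcard : ((sA ∪ sB).card : ℝ) = sA.card + sB.card := by
            rw [Finset.card_union_of_disjoint hdsAB]; push_cast; ring
          by_cases hle : (tA.card : ℝ) ≤ tB.card
          · refine ⟨sA ∪ sB, tB, hclique, htB, ?_⟩
            rw [hcard]
            nlinarith [Nat.cast_nonneg (α := ℝ) sA.card, Nat.cast_nonneg (α := ℝ) sB.card,
              Nat.cast_nonneg (α := ℝ) tA.card, Nat.cast_nonneg (α := ℝ) tB.card]
          · refine ⟨sA ∪ sB, tA, hclique, htA, ?_⟩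
            rw [hcard]
            push_neg at hle
            nlinarith [Nat.cast_nonneg (α := ℝ) sA.card, Nat.cast_nonneg (α := ℝ) sB.card,
              Nat.cast_nonneg (α := ℝ) tA.card, Nat.cast_nonneg (α := ℝ) tB.card]
        · -- anticomplete case
          have hdtAB : Disjoint tA tB := hsub_dis htAsub htBsub
          have hclique : Gᶜ.IsClique ((tA ∪ tB : Finset (Fin n)) : Set (Fin n)) := by
            intro x hx y hy hxy
            simp only [Finset.coe_union, Set.mem_union] at hx hy
            rcases hx with hx | hx <;> rcases hy with hy | hy
            · exact htA hx hy hxy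
            · exact (G.compl_adj x y).mpr ⟨hxy, hanti x (htAsub hx) y (htBsub hy)⟩
            · exact (G.compl_adj x y).mpr ⟨hxy, fun h => hanti y (htAsub hy) x (htBsub hx) h.symm⟩
            · exact htB hx hy hxy
          have hcard : (((tA ∪ tB)).card : ℝ) = tA.card + tB.card := by
            rw [Finset.card_union_of_disjoint hdtAB]; push_cast; ring
          by_cases hle : (sA.card : ℝ) ≤ sB.card
          · refine ⟨sB, tA ∪ tB, hsB, hclique, ?_⟩
            rw [hcard]
            nlinarith [Nat.cast_nonneg (α := ℝ) sA.card, Nat.cast_nonneg (α := ℝ) sB.card,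
              Nat.cast_nonneg (α := ℝ) tA.card, Nat.cast_nonneg (α := ℝ) tB.card]
          · refine ⟨sA, tA ∪ tB, hsA, hclique, ?_⟩
            rw [hcard]
            push_neg at hle
            nlinarith [Nat.cast_nonneg (α := ℝ) sA.card, Nat.cast_nonneg (α := ℝ) sB.card,
              Nat.cast_nonneg (α := ℝ) tA.card, Nat.cast_nonneg (α := ℝ) tB.card]
  refine ⟨c / 2, by positivity, ?_⟩
  intro n G hG
  obtain ⟨s, t, hs, ht, hb⟩ := key n G hG
  have hsqrt : (n : ℝ) ^ (c / 2) = Real.sqrt ((n : ℝ) ^ c) := by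
    rw [Real.sqrt_eq_rpow, show c / 2 = c * (1/2) by ring,
      Real.rpow_mul (Nat.cast_nonneg n)]
  by_cases hle : (s.card : ℝ) ≤ t.card
  · refine ⟨t, Or.inr ht, ?_⟩
    rw [hsqrt]
    calc Real.sqrt ((n : ℝ) ^ c) ≤ Real.sqrt ((t.card : ℝ) * t.card) := by
          refine Real.sqrt_le_sqrt (hb.trans ?_)
          exact mul_le_mul_of_nonneg_right hle (Nat.cast_nonneg _)
      _ = t.card := Real.sqrt_mul_self (Nat.cast_nonneg _)
  · refine ⟨s, Or.inl hs, ?_⟩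
    push_neg at hle
    rw [hsqrt]
    calc Real.sqrt ((n : ℝ) ^ c) ≤ Real.sqrt ((s.card : ℝ) * s.card) := by
          refine Real.sqrt_le_sqrt (hb.trans ?_)
          exact mul_le_mul_of_nonneg_left hle.le (Nat.cast_nonneg _)
      _ = s.card := Real.sqrt_mul_self (Nat.cast_nonneg _)
end
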